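/- arXiv:math/0006051 — 4 statements merged into one kernel-verified Lean document; each statement's English description precedes it below -/
import Mathlib

section
/- Let n ≥ 2 and define rational numbers a_0 = -n and a_k = (-1)^k/(k-1)! + (-1)^{k+1} n/k! for 1 ≤ k ≤ n-1, with a_n = 0. Then a_0 + a_1 = -1 and for every l with 1 ≤ l ≤ n-1 one has ∑_{k=0}^{l} (a_k + (k+1) a_{k+1}) / (l-k)! = 0. -/
/-!
For `k ≤ n` the coefficients take the uniform shape `a_k = (-1)^k (k - n) / k!`, so
`a_k + (k+1) a_{k+1} = -(-1)^k / k!` no longer depends on `n`. The `l`-th sum is then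
`-(1/l!) ∑_k (-1)^k C(l,k)`, which vanishes for `l ≥ 1`.
-/

open Finset Nat

def coeff (n k : ℕ) : ℚ :=
  if k = 0 then -(n : ℚ)
  else if k ≤ n - 1 then
    (-1) ^ k / ((k - 1).factorial : ℚ) + (-1) ^ (k + 1) * (n : ℚ) / (k.factorial : ℚ)
  else 0

theorem coeff_eq_of_le {n k : ℕ} (hk : k ≤ n) :
    coeff n k = (-1) ^ k * ((k : ℚ) - n) / k ! := by
  rcases Nat.eq_zero_or_pos k with rfl | hk0
  · simp [coeff]
  rcases hk.lt_or_eq with hkn | rfl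
  · obtain ⟨m, rfl⟩ : ∃ m, k = m + 1 := ⟨k - 1, by omega⟩
    rw [coeff, if_neg (by omega), if_pos (by omega), Nat.add_sub_cancel, factorial_succ]
    push_cast
    field_simp
    ring
  · rw [coeff, if_neg (by omega), if_neg (by omega)]
    simp

theorem coeff_add_mul_coeff_succ {n k : ℕ} (hk : k < n) :
    coeff n k + ((k : ℚ) + 1) * coeff n (k + 1) = -(-1) ^ k / k ! := by
  rw [coeff_eq_of_le hk.le, coeff_eq_of_le hk, factorial_succ, pow_succ]
  push_cast
  field_simp
  ring

theorem sum_range_neg_one_pow_div_factorial_mul_factorial {K : Type*} [Field K] [CharZero K]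
    {l : ℕ} (hl : l ≠ 0) :
    ∑ k ∈ range (l + 1), (-1 : K) ^ k / (k ! * (l - k)!) = 0 := by
  have hchoose : ∀ k ∈ range (l + 1),
      (-1 : K) ^ k / (k ! * (l - k)!) = (-1) ^ k * (l.choose k : K) / l ! := by
    intro k hk
    rw [cast_choose K (Nat.lt_succ_iff.mp (mem_range.mp hk)), mul_div_assoc', div_div,
      mul_div_mul_right _ _ (cast_ne_zero.mpr (factorial_ne_zero l))]
  have halt : ∑ k ∈ range (l + 1), (-1 : K) ^ k * (l.choose k : K) = 0 := by
    exact_mod_cast Int.alternating_sum_range_choose_of_ne hl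
  rw [sum_congr rfl hchoose, ← sum_div, halt, zero_div]

/-- For `n ≥ 2` and `a_0 = -n`, `a_k = (-1)^k/(k-1)! + (-1)^{k+1} n/k!` for
`1 ≤ k ≤ n-1`, `a_k = 0` for `k ≥ n`: one has `a_0 + a_1 = -1` and for all `1 ≤ l ≤ n-1`,
`∑_{k=0}^{l} (a_k + (k+1) a_{k+1})/(l-k)! = 0`. -/
theorem coefficients_satisfy_system (n : ℕ) (hn : 2 ≤ n)
    (a : ℕ → ℚ)
    (ha : a = fun k => if k = 0 then -(n : ℚ)
      else if k ≤ n - 1 then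
        (-1) ^ k / ((k - 1).factorial : ℚ) + (-1) ^ (k + 1) * (n : ℚ) / (k.factorial : ℚ)
      else 0) :
    a 0 + a 1 = -1 ∧
      ∀ l : ℕ, 1 ≤ l → l ≤ n - 1 →
        ∑ k ∈ Finset.range (l + 1),
          (a k + ((k : ℚ) + 1) * a (k + 1)) / (((l - k).factorial : ℚ)) = 0 := by
  obtain rfl : a = coeff n := ha
  refine ⟨by simpa using coeff_add_mul_coeff_succ (n := n) (k := 0) (by omega), ?_⟩
  intro l hl hln
  calc ∑ k ∈ range (l + 1), (coeff n k + ((k : ℚ) + 1) * coeff n (k + 1)) / ((l - k)! : ℚ)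
      = ∑ k ∈ range (l + 1), -((-1 : ℚ) ^ k / (k ! * (l - k)!)) := by
        refine sum_congr rfl fun k hk => ?_
        rw [coeff_add_mul_coeff_succ (by have := mem_range.mp hk; omega), div_div, neg_div]
    _ = 0 := by
        rw [sum_neg_distrib, sum_range_neg_one_pow_div_factorial_mul_factorial (by omega),
          neg_zero]
end

section
/- Let n ≥ 1 and let A(t) ∈ ℚ[[t]] be a formal power series. If A(t) + A'(t) ≡ a·e^{-t} (mod t^n) for a constant a ∈ ℚ, then there exists b ∈ ℚ such that A(t) ≡ (at + b)e^{-t} (mod t^{n+1}). -/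
open PowerSeries

private noncomputable def Eser : ℚ⟦X⟧ := PowerSeries.mk (fun m => (-1) ^ m / (m.factorial : ℚ))

private noncomputable def Bser (a b : ℚ) : ℚ⟦X⟧ :=
  (PowerSeries.C (R := ℚ) a * X + PowerSeries.C (R := ℚ) b) * Eser

private lemma coeff_B_zero (a b : ℚ) : PowerSeries.coeff (R := ℚ) 0 (Bser a b) = b := by
  simp [Bser, Eser]

private lemma coeff_B_succ (a b : ℚ) (k : ℕ) :
    PowerSeries.coeff (R := ℚ) (k + 1) (Bser a b)
      = a * ((-1) ^ k / (k.factorial : ℚ)) + b * ((-1) ^ (k+1) / ((k+1).factorial : ℚ)) := by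
  have : Bser a b = PowerSeries.C (R := ℚ) a * (X * Eser) + PowerSeries.C (R := ℚ) b * Eser := by
    ring_nf; rw [Bser]; ring
  rw [this, map_add, PowerSeries.coeff_C_mul, PowerSeries.coeff_C_mul,
    PowerSeries.coeff_succ_X_mul]
  simp [Eser]

private lemma key (a b : ℚ) (m : ℕ) :
    PowerSeries.coeff (R := ℚ) m (Bser a b) + ((m : ℚ) + 1) * PowerSeries.coeff (R := ℚ) (m + 1) (Bser a b)
      = a * ((-1) ^ m / (m.factorial : ℚ)) := by
  cases m with
  | zero => rw [coeff_B_zero, coeff_B_succ]; norm_num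
  | succ k =>
      rw [coeff_B_succ, coeff_B_succ]
      have hk : (k.factorial : ℚ) ≠ 0 := Nat.cast_ne_zero.mpr k.factorial_ne_zero
      have h1 : ((k+1).factorial : ℚ) = (k + 1) * k.factorial := by
        rw [Nat.factorial_succ]; push_cast; ring
      have h2 : ((k+2).factorial : ℚ) = (k + 2) * ((k+1) * k.factorial) := by
        show ((k+1+1).factorial : ℚ) = _
        rw [Nat.factorial_succ, Nat.factorial_succ]; push_cast; ring
      have : ((k:ℚ)+1) ≠ 0 := by positivity
      have : ((k:ℚ)+2) ≠ 0 := by positivity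
      push_cast
      rw [h1, h2]
      field_simp
      ring

/-- For `n ≥ 1` and `A ∈ ℚ⟦t⟧`: if `A + A' ≡ a·e^{-t} (mod t^n)` for a
constant `a ∈ ℚ`, then there is `b ∈ ℚ` with `A ≡ (a t + b)·e^{-t} (mod t^{n+1})`. -/
theorem solve_linear_ODE_mod (n : ℕ) (hn : 1 ≤ n) (A : ℚ⟦X⟧) (a : ℚ)
    (h : ∀ m : ℕ, m < n →
      (PowerSeries.coeff (R := ℚ) m) (A + PowerSeries.derivative ℚ A)
        = (PowerSeries.coeff (R := ℚ) m)
            (PowerSeries.C (R := ℚ) a * PowerSeries.mk (fun m => (-1) ^ m / (m.factorial : ℚ)))) :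
    ∃ b : ℚ, ∀ m : ℕ, m < n + 1 →
      (PowerSeries.coeff (R := ℚ) m) A
        = (PowerSeries.coeff (R := ℚ) m)
            ((PowerSeries.C (R := ℚ) a * X + PowerSeries.C (R := ℚ) b)
              * PowerSeries.mk (fun m => (-1) ^ m / (m.factorial : ℚ))) := by
  set b := PowerSeries.coeff (R := ℚ) 0 A with hb
  refine ⟨b, ?_⟩
  have main : ∀ m : ℕ, m ≤ n → PowerSeries.coeff (R := ℚ) m A = PowerSeries.coeff (R := ℚ) m (Bser a b) := by
    intro m
    induction m with
    | zero => intro _; rw [coeff_B_zero]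
    | succ k ih =>
        intro hk1
        have hk : k < n := Nat.lt_of_succ_le hk1
        have hA := h k hk
        rw [map_add, PowerSeries.coeff_derivative, PowerSeries.coeff_C_mul,
          PowerSeries.coeff_mk] at hA
        have hB := key a b k
        have hAk := ih (Nat.le_of_lt hk)
        have hne : ((k : ℚ) + 1) ≠ 0 := by positivity
        apply mul_left_cancel₀ hne
        have : PowerSeries.coeff (R := ℚ) (k+1) A * ((k:ℚ)+1) =
            a * ((-1)^k / (k.factorial : ℚ)) - PowerSeries.coeff (R := ℚ) k A := by
          linarith [hA]
        rw [hAk] at this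
        linarith [hB, this]
  intro m hm
  have := main m (Nat.lt_succ_iff.mp hm)
  rw [this, Bser, Eser]
end

section
/- Let W be a complete DVR with uniformizer p and fraction field K, let z ∈ W with z and z-1 units, and suppose z^{p^k} = z for some k ≥ 1 (z a root of unity of order prime to p). Let Li_n: a sequence of elements satisfying the recursion Li_n(z) = L^{(p)}_n(z) + p^{-n} Li_n(z^p) where L^{(p)}_n(z^{p^i}) ∈ W for all i. Then Li_n(z) = (p^n/(p^{kn} - 1)) · ∑_{i=0}^{k-1} p^{(k-1-i)n} L^{(p)}_n(z^{p^i}), and in particular Li_n(z) ∈ p^n W. -/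
/-!
Read backwards, the recursion is the linear recurrence `a (i + 1) = p ^ n * (a i - b i)` for
`a i = Li (z ^ p ^ i)` and `b i = Lp (z ^ p ^ i)`. Since `z ^ p ^ k = z`, running it once around
the cycle returns to `a 0`, which gives
`(p ^ (k * n) - 1) * a 0 = p ^ n * ∑ i < k, p ^ ((k - 1 - i) * n) * b i`.
The factor `p ^ (k * n) - 1` is a unit of `W`, so dividing by it keeps `a 0` in `p ^ n W`.
-/

open Finset

theorem add_mul_sum_eq_pow_mul_of_succ_eq {R : Type*} [CommRing R] (P : R) (a b : ℕ → R)
    {k : ℕ} (h : ∀ i < k, a (i + 1) = P * (a i - b i)) :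
    a k + P * ∑ i ∈ range k, P ^ (k - 1 - i) * b i = P ^ k * a 0 := by
  induction k with
  | zero => simp
  | succ k ih =>
    have hsum : P * ∑ i ∈ range k, P ^ (k - i) * b i
        = P * (P * ∑ i ∈ range k, P ^ (k - 1 - i) * b i) := by
      rw [mul_sum, mul_sum, mul_sum]
      refine sum_congr rfl fun i hi => ?_
      rw [show k - i = k - 1 - i + 1 by grind, pow_succ']
      ring
    rw [h k (by omega), sum_range_succ, Nat.add_sub_cancel, Nat.sub_self, mul_add, hsum]
    linear_combination P * ih fun i hi => h i (by omega)

theorem polylog_root_of_unity_value_general {W K : Type*} [CommRing W]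
    [Field K] [Algebra W K] [IsFractionRing W K]
    (p : ℕ) (hirr : Irreducible (p : W))
    (n k : ℕ)
    (z : W) (hzk : z ^ p ^ k = z)
    (Li Lp : W → K)
    (hrec : ∀ i, i < k →
      Li (z ^ p ^ i) = Lp (z ^ p ^ i) + ((p : K) ^ n)⁻¹ * Li (z ^ p ^ (i + 1)))
    (hLp : ∀ i, i < k → ∃ u : W, Lp (z ^ p ^ i) = algebraMap W K u)
    (hunit : IsUnit ((p : W) ^ (k * n) - 1)) :
    Li z = ((p : K) ^ n / ((p : K) ^ (k * n) - 1))
        * ∑ i ∈ Finset.range k, (p : K) ^ ((k - 1 - i) * n) * Lp (z ^ p ^ i)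
      ∧ ∃ u : W, Li z = algebraMap W K ((p : W) ^ n * u) := by
  have hp0 : (p : K) ^ n ≠ 0 := pow_ne_zero _ <| by
    simpa using (IsFractionRing.injective W K).ne hirr.ne_zero
  have hD : algebraMap W K hunit.unit = ((p : K) ^ n) ^ k - 1 := by simp [pow_mul']
  simp_rw [pow_mul']
  have hstep : ∀ i < k, Li (z ^ p ^ (i + 1)) = (p : K) ^ n * (Li (z ^ p ^ i) - Lp (z ^ p ^ i)) :=
    fun i hi => by rw [hrec i hi]; field_simp; ring
  have hcycle := add_mul_sum_eq_pow_mul_of_succ_eq _ (fun i => Li (z ^ p ^ i))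
    (fun i => Lp (z ^ p ^ i)) hstep
  simp only [pow_zero, pow_one, hzk] at hcycle
  have hformula : Li z = (p : K) ^ n / (((p : K) ^ n) ^ k - 1)
      * ∑ i ∈ range k, ((p : K) ^ n) ^ (k - 1 - i) * Lp (z ^ p ^ i) := by
    rw [div_mul_eq_mul_div, eq_div_iff (hD ▸ hunit.unit.isUnit.map (algebraMap W K)).ne_zero]
    linear_combination -hcycle
  obtain ⟨s, hs⟩ : ∑ i ∈ range k, ((p : K) ^ n) ^ (k - 1 - i) * Lp (z ^ p ^ i)
      ∈ (algebraMap W K).range :=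
    Subring.sum_mem _ fun i hi => Subring.mul_mem _ ⟨((p : W) ^ n) ^ (k - 1 - i), by simp⟩
      (let ⟨u, hu⟩ := hLp i (mem_range.1 hi); ⟨u, hu.symm⟩)
  refine ⟨hformula, ↑hunit.unit⁻¹ * s, ?_⟩
  rw [map_mul, map_mul, map_units_inv, hD, hs, hformula, map_pow, map_natCast]
  ring

/-- Let `W` be a (complete) DVR with uniformizer `p`, fraction field `K`,
`z ∈ W` with `z`, `z-1` units and `z^{p^k} = z`. If `Li_n`, `L^{(p)}_n` satisfy the
recursion `Li_n(z^{p^i}) = L^{(p)}_n(z^{p^i}) + p^{-n} Li_n(z^{p^{i+1}})` with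
`L^{(p)}_n(z^{p^i}) ∈ W`, then
`Li_n(z) = (p^n/(p^{kn}-1)) ∑_{i=0}^{k-1} p^{(k-1-i)n} L^{(p)}_n(z^{p^i})`,
and in particular `Li_n(z) ∈ p^n W`. -/
theorem polylog_root_of_unity_value {W K : Type*} [CommRing W] [IsDomain W]
    [IsDiscreteValuationRing W] [Field K] [Algebra W K] [IsFractionRing W K]
    (p : ℕ) (hp : p.Prime) (hirr : Irreducible (p : W))
    (n k : ℕ) (hn : 1 ≤ n) (hk : 1 ≤ k)
    (z : W) (hz : IsUnit z) (hz1 : IsUnit (z - 1)) (hzk : z ^ p ^ k = z)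
    (Li Lp : W → K)
    (hrec : ∀ i, i < k →
      Li (z ^ p ^ i) = Lp (z ^ p ^ i) + ((p : K) ^ n)⁻¹ * Li (z ^ p ^ (i + 1)))
    (hLp : ∀ i, i < k → ∃ u : W, Lp (z ^ p ^ i) = algebraMap W K u)
    (hunit : IsUnit ((p : W) ^ (k * n) - 1)) :
    Li z = ((p : K) ^ n / ((p : K) ^ (k * n) - 1))
        * ∑ i ∈ Finset.range k, (p : K) ^ ((k - 1 - i) * n) * Lp (z ^ p ^ i)
      ∧ ∃ u : W, Li z = algebraMap W K ((p : W) ^ n * u) :=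
  polylog_root_of_unity_value_general p hirr n k z hzk Li Lp hrec hLp hunit
end

section
/- Let W be a complete DVR with uniformizer p and p > n+1. Let α ∈ W be a unit with 1 - α a unit, and let (g_m)_{m=0}^{n} be functions of w ∈ W given by convergent power series with g₀(w) = α(1+pw)/(1-α(1+pw)), g_m(0) = c_m ∈ W, and g_m'(w) = g_{m-1}(w)/(1+pw). Then for each m ≤ n and all w ∈ W: g_m(w) ≡ ∑_{k=0}^{m} c_{m-k} w^k / k! (mod p), where c_0 = α/(1-α). -/
/-!
Write `g_m(w) = ∑ a_k w^k`. Comparing coefficients in `(1 + p w) g_{m+1}' = g_m` (the identity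
theorem on the unit ball) gives `(k+1)! d_{k+1} = k! a_k - p k (k! d_k)` for the coefficients `d`
of `g_{m+1}`. Hence, by induction on `m` starting from the geometric expansion of `g_0`, the
scaled coefficients `k! a_k` are `≡ c_{m-k} (mod p)` for `k ≤ m` and divisible by `p^{k-m}` for
`k ≥ m`. For `k ≤ m < p` the factorial is a unit, and for `k > m` Legendre's bound
`v_p(k!) < k / (p - 1) ≤ k - m` leaves at least one factor `p` in `a_k`; the ultrametric
inequality then passes the coefficientwise congruence to the sums.
-/

open Filter Topology Finset Asymptotics
open scoped Nat

section Ultrametric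

variable {K : Type*}

lemma IsUltrametricDist.norm_sub_le_max [SeminormedAddGroup K] [IsUltrametricDist K]
    (x y : K) : ‖x - y‖ ≤ max ‖x‖ ‖y‖ := by
  simpa [sub_eq_add_neg] using IsUltrametricDist.norm_add_le_max x (-y)

lemma IsUltrametricDist.norm_le_of_hasSum [NormedAddCommGroup K] [IsUltrametricDist K]
    {ι : Type*} {f : ι → K} {s : K} {C : ℝ} (hs : HasSum f s) (hC : 0 ≤ C)
    (h : ∀ i, ‖f i‖ ≤ C) : ‖s‖ ≤ C :=
  hs.tsum_eq ▸ IsUltrametricDist.norm_tsum_le_of_forall_le_of_nonneg hC h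

lemma IsUltrametricDist.norm_le_of_norm_sub_le [SeminormedAddGroup K] [IsUltrametricDist K]
    {x y : K} {r : ℝ} (hxy : ‖x - y‖ ≤ r) (hy : ‖y‖ ≤ r) : ‖x‖ ≤ r := by
  simpa using (IsUltrametricDist.norm_add_le_max (x - y) y).trans (max_le hxy hy)

variable [NormedField K]

lemma one_sub_ne_zero_of_norm_lt_one {x : K} (hx : ‖x‖ < 1) : 1 - x ≠ 0 := fun h => by
  simp [← sub_eq_zero.mp h] at hx

variable [IsUltrametricDist K]

lemma norm_natCast_eq_one_of_coprime {p j : ℕ} (hp : ‖(p : K)‖ < 1) (h : j.Coprime p) :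
    ‖(j : K)‖ = 1 := by
  refine le_antisymm (IsUltrametricDist.norm_natCast_le_one K j) (not_lt.mp fun hj => ?_)
  obtain ⟨u, v, huv⟩ := Nat.isCoprime_iff_coprime.mpr h
  have hbezout : (u : K) * j + v * p = 1 := by
    exact_mod_cast congrArg (Int.cast : ℤ → K) huv
  have hlt : ‖(u : K) * j + v * p‖ < 1 := by
    refine (IsUltrametricDist.norm_add_le_max _ _).trans_lt (max_lt ?_ ?_) <;> rw [norm_mul]
    · exact mul_lt_one_of_nonneg_of_lt_one_right
        (IsUltrametricDist.norm_intCast_le_one K u) (norm_nonneg _) hj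
    · exact mul_lt_one_of_nonneg_of_lt_one_right
        (IsUltrametricDist.norm_intCast_le_one K v) (norm_nonneg _) hp
  simp [hbezout] at hlt

lemma norm_natCast_eq_pow_padicValNat {p N : ℕ} (hp : p.Prime) (hpK : ‖(p : K)‖ < 1)
    (hN : N ≠ 0) : ‖(N : K)‖ = ‖(p : K)‖ ^ padicValNat p N := by
  have hsplit : (N : K) = (p : K) ^ N.factorization p * ((N / p ^ N.factorization p : ℕ) : K) := by
    rw [← Nat.cast_pow, ← Nat.cast_mul, Nat.ordProj_mul_ordCompl_eq_self N p]
  rw [hsplit, norm_mul, norm_pow,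
    norm_natCast_eq_one_of_coprime hpK (Nat.coprime_ordCompl hp hN).symm, mul_one,
    Nat.factorization_def N hp]

lemma norm_factorial_eq_one {p k : ℕ} (hp : p.Prime) (hpK : ‖(p : K)‖ < 1) (hk : k < p) :
    ‖(k ! : K)‖ = 1 :=
  norm_natCast_eq_one_of_coprime hpK
    ((hp.coprime_iff_not_dvd.mpr (by rw [hp.dvd_factorial]; omega)).symm)

lemma norm_add_pow_succ_sub_le {x h : K} (hx : ‖x‖ ≤ 1) (hh : ‖h‖ ≤ 1) (k : ℕ) :
    ‖(x + h) ^ (k + 1) - x ^ (k + 1) - (k + 1) * h * x ^ k‖ ≤ ‖h‖ ^ 2 := by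
  induction k with
  | zero => simp
  | succ k ih =>
    have hxh : ‖x + h‖ ≤ 1 := (IsUltrametricDist.norm_add_le_max x h).trans (max_le hx hh)
    have hk : ‖((k : K) + 1) * h ^ 2 * x ^ k‖ ≤ ‖h‖ ^ 2 := by
      have hk1 : ‖(k : K) + 1‖ ≤ 1 := by
        exact_mod_cast IsUltrametricDist.norm_natCast_le_one K (k + 1)
      calc ‖((k : K) + 1) * h ^ 2 * x ^ k‖ ≤ 1 * ‖h‖ ^ 2 * 1 := by
            rw [norm_mul, norm_mul, norm_pow, norm_pow]
            gcongr
            exact pow_le_one₀ (norm_nonneg _) hx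
        _ = ‖h‖ ^ 2 := by ring
    have hx' : ‖(x + h) * ((x + h) ^ (k + 1) - x ^ (k + 1) - (k + 1) * h * x ^ k)‖ ≤ ‖h‖ ^ 2 := by
      rw [norm_mul]
      exact mul_le_of_le_one_left (norm_nonneg _) hxh |>.trans ih
    have hsplit : (x + h) ^ (k + 1 + 1) - x ^ (k + 1 + 1) - ((k + 1 : ℕ) + 1) * h * x ^ (k + 1)
        = (x + h) * ((x + h) ^ (k + 1) - x ^ (k + 1) - (k + 1) * h * x ^ k)
          + ((k : K) + 1) * h ^ 2 * x ^ k := by push_cast; ring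
    rw [hsplit]
    exact (IsUltrametricDist.norm_add_le_max _ _).trans (max_le hx' hk)

end Ultrametric

lemma padicValNat_factorial_add_lt {p m k : ℕ} (hp : p.Prime) (hm : m + 1 < p) (hk : m < k) :
    padicValNat p k ! + m < k := by
  have := Fact.mk hp
  have hlt := sub_one_mul_padicValNat_factorial_lt_of_ne_zero p (n := k) (by omega)
  have hle : (m + 1) * padicValNat p k ! ≤ (p - 1) * padicValNat p k ! :=
    Nat.mul_le_mul_right _ (by omega)
  rcases Nat.eq_zero_or_pos (padicValNat p k !) with h0 | hpos
  · omega
  · nlinarith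

section Coefficients

variable {K : Type*} [NormedField K]

/-- `A k` stands for `k! * a k`, where `a` are the power series coefficients of `g_m`. -/
def IsTaylorApprox (π : K) (c : ℕ → K) (m : ℕ) (A : ℕ → K) : Prop :=
  (∀ k ≤ m, ‖A k - c (m - k)‖ ≤ ‖π‖) ∧ ∀ k, m ≤ k → ‖A k‖ ≤ ‖π‖ ^ (k - m)

def taylorCoeff (c : ℕ → K) (m k : ℕ) : K :=
  if k < m + 1 then c (m - k) / k ! else 0

/-- Coefficients of `α (1 + π w) / (1 - α (1 + π w)) = (1 - α)⁻¹ (1 - β π w)⁻¹ - 1`,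
where `β = α / (1 - α)`. -/
def geomCoeff (α π : K) (k : ℕ) : K :=
  (1 - α)⁻¹ * (α / (1 - α) * π) ^ k - if k = 0 then 1 else 0

variable [IsUltrametricDist K] {π : K} {c a A B : ℕ → K} {m : ℕ}

lemma isTaylorApprox_zero (ha0 : a 0 = c 0) (ha : ∀ k, ‖a k‖ ≤ ‖π‖ ^ k) :
    IsTaylorApprox π c 0 fun k => k ! * a k := by
  refine ⟨fun k hk => ?_, fun k _ => ?_⟩
  · obtain rfl : k = 0 := Nat.le_zero.mp hk
    simp [ha0]
  · rw [norm_mul, Nat.sub_zero]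
    exact (mul_le_of_le_one_left (norm_nonneg _)
      (IsUltrametricDist.norm_natCast_le_one K _)).trans (ha k)

lemma isTaylorApprox_zero_geomCoeff {α : K} (hα1 : ‖1 - α‖ = 1) (hc0 : c 0 = α / (1 - α))
    (hc : ‖c 0‖ ≤ 1) : IsTaylorApprox π c 0 fun k => k ! * geomCoeff α π k := by
  have h1α : 1 - α ≠ 0 := norm_ne_zero_iff.mp (by simp [hα1])
  have hcoeff0 : geomCoeff α π 0 = c 0 := by
    rw [geomCoeff, hc0, pow_zero, mul_one, if_pos rfl]
    field_simp
    ring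
  refine isTaylorApprox_zero hcoeff0 fun k => ?_
  rcases k with _ | k
  · rw [hcoeff0, pow_zero]
    exact hc
  · rw [geomCoeff, if_neg k.succ_ne_zero, sub_zero, norm_mul, norm_inv, hα1, inv_one, one_mul,
      norm_pow, norm_mul]
    exact pow_le_pow_left₀ (by positivity) (mul_le_of_le_one_left (norm_nonneg _) (hc0 ▸ hc)) _

lemma IsTaylorApprox.succ (hπ : ‖π‖ ≤ 1) (hc : ∀ j, ‖c j‖ ≤ 1)
    (hA : IsTaylorApprox π c m A) (hB0 : B 0 = c (m + 1))
    (hrec : ∀ k, B (k + 1) = A k - π * k * B k) : IsTaylorApprox π c (m + 1) B := by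
  have hstep : ∀ k, ‖π * k * B k‖ ≤ ‖π‖ * ‖B k‖ := fun k => by
    rw [norm_mul, norm_mul]
    gcongr
    exact mul_le_of_le_one_right (norm_nonneg _) (IsUltrametricDist.norm_natCast_le_one K k)
  have hlow : ∀ k ≤ m + 1, ‖B k - c (m + 1 - k)‖ ≤ ‖π‖ := by
    intro k hk
    induction k with
    | zero => simp [hB0]
    | succ k ih =>
      have hBk : ‖B k‖ ≤ 1 :=
        IsUltrametricDist.norm_le_of_norm_sub_le ((ih (by omega)).trans hπ) (hc _)
      rw [hrec, show m + 1 - (k + 1) = m - k by omega,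
        show A k - π * k * B k - c (m - k) = (A k - c (m - k)) - π * k * B k by ring]
      exact (IsUltrametricDist.norm_sub_le_max _ _).trans (max_le (hA.1 k (by omega))
        ((hstep k).trans (mul_le_of_le_one_right (norm_nonneg _) hBk)))
  refine ⟨hlow, fun k hk => ?_⟩
  induction k, hk using Nat.le_induction with
  | base =>
    simpa using IsUltrametricDist.norm_le_of_norm_sub_le ((hlow (m + 1) le_rfl).trans hπ) (hc _)
  | succ k hk ih =>
    rw [hrec, show k + 1 - (m + 1) = k - m by omega]
    refine (IsUltrametricDist.norm_sub_le_max _ _).trans (max_le (hA.2 k (by omega)) ?_)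
    calc ‖π * k * B k‖ ≤ ‖π‖ * ‖π‖ ^ (k - (m + 1)) := (hstep k).trans (by gcongr)
      _ = ‖π‖ ^ (k - m) := by rw [show k - m = k - (m + 1) + 1 by omega, pow_succ']

lemma IsTaylorApprox.norm_sub_taylorCoeff_le {p : ℕ} (hp : p.Prime) (hpK : ‖(p : K)‖ < 1)
    (hp0 : (p : K) ≠ 0) (hm : m + 1 < p) (h : IsTaylorApprox (p : K) c m fun k => k ! * a k)
    (k : ℕ) : ‖a k - taylorCoeff c m k‖ ≤ ‖(p : K)‖ := by
  rcases lt_or_ge k (m + 1) with hk | hk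
  · have hfac : ‖(k ! : K)‖ = 1 := norm_factorial_eq_one hp hpK (by omega)
    have hfac0 : (k ! : K) ≠ 0 := norm_ne_zero_iff.mp (by simp [hfac])
    calc ‖a k - taylorCoeff c m k‖ = ‖k ! * a k - c (m - k)‖ := by
          rw [taylorCoeff, if_pos hk, ← one_mul ‖a k - _‖, ← hfac, ← norm_mul, mul_sub,
            mul_div_cancel₀ _ hfac0]
      _ ≤ ‖(p : K)‖ := h.1 k (by omega)
  · rw [taylorCoeff, if_neg (by omega), sub_zero]
    have hv := padicValNat_factorial_add_lt hp hm hk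
    have hρ : 0 < ‖(p : K)‖ := norm_pos_iff.mpr hp0
    have hbound := h.2 k (by omega)
    rw [norm_mul, norm_natCast_eq_pow_padicValNat hp hpK (Nat.factorial_ne_zero k)] at hbound
    refine le_of_mul_le_mul_left (hbound.trans ?_) (pow_pos hρ (padicValNat p k !))
    rw [← pow_succ]
    exact pow_le_pow_of_le_one hρ.le hpK.le (by omega)

end Coefficients

section PowerSeries

variable {K : Type*} [NontriviallyNormedField K]

def HasPowerSeriesOnUnitBall (f : K → K) (a : ℕ → K) : Prop :=
  ∀ w : K, ‖w‖ ≤ 1 → HasSum (fun k => a k * w ^ k) (f w)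

namespace HasPowerSeriesOnUnitBall

variable {f g : K → K} {a b : ℕ → K}

lemma coeff_zero (h : HasPowerSeriesOnUnitBall f a) : a 0 = f 0 := by
  simpa using ((h 0 (by simp)).tsum_eq.symm.trans (tsum_eq_single 0 fun k hk => by simp [hk])).symm

lemma congr (h : HasPowerSeriesOnUnitBall f a) (hfg : ∀ w : K, ‖w‖ ≤ 1 → f w = g w) :
    HasPowerSeriesOnUnitBall g a := fun w hw => hfg w hw ▸ h w hw

lemma tendsto_coeff (h : HasPowerSeriesOnUnitBall f a) : Tendsto a atTop (𝓝 0) := by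
  simpa using (h 1 (by simp)).summable.tendsto_atTop_zero

lemma hasFPowerSeriesOnBall (h : HasPowerSeriesOnUnitBall f a) :
    HasFPowerSeriesOnBall f (FormalMultilinearSeries.ofScalars K a) 0 1 where
  r_le := by
    obtain ⟨C, hC⟩ := h.tendsto_coeff.norm.bddAbove_range
    exact_mod_cast (FormalMultilinearSeries.ofScalars K a).le_radius_of_bound C (r := 1)
      fun n => by simpa [FormalMultilinearSeries.ofScalars_norm] using hC ⟨n, rfl⟩
  r_pos := one_pos
  hasSum {y} hy := by
    have hy1 : ‖y‖₊ ≤ 1 := by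
      simpa [edist_zero_right, enorm_eq_nnnorm] using (Metric.mem_eball.mp hy).le
    simpa [FormalMultilinearSeries.ofScalars_apply_eq, mul_comm] using h y (by exact_mod_cast hy1)

lemma unique (ha : HasPowerSeriesOnUnitBall f a) (hb : HasPowerSeriesOnUnitBall f b) : a = b :=
  FormalMultilinearSeries.ofScalars_series_injective K K <|
    ha.hasFPowerSeriesOnBall.hasFPowerSeriesAt.eq_formalMultilinearSeries
      hb.hasFPowerSeriesOnBall.hasFPowerSeriesAt

variable [IsUltrametricDist K]

/-- Termwise differentiation works up to the boundary of the unit ball: ultrametrically, the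
second-order remainder of every monomial is at most `‖x - w‖ ^ 2`, uniformly in the degree. -/
lemma hasDerivAt (h : HasPowerSeriesOnUnitBall f a) {w D : K} (hw : ‖w‖ ≤ 1)
    (hD : HasSum (fun k : ℕ => ((k : K) + 1) * a (k + 1) * w ^ k) D) : HasDerivAt f D w := by
  obtain ⟨C, hC⟩ := h.tendsto_coeff.norm.bddAbove_range
  have hC0 : 0 ≤ C := (norm_nonneg _).trans (hC ⟨0, rfl⟩)
  have hquad : (fun x => f x - f w - (x - w) • D) =O[𝓝 w] fun x => ‖x - w‖ ^ 2 := by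
    refine IsBigO.of_bound C ?_
    filter_upwards [Metric.closedBall_mem_nhds w one_pos] with x hx
    rw [Metric.mem_closedBall, dist_eq_norm] at hx
    set t := x - w
    have hx1 : ‖x‖ ≤ 1 := by
      simpa [t] using (IsUltrametricDist.norm_add_le_max w t).trans (max_le hw hx)
    have hdiff : HasSum (fun k => a (k + 1) * x ^ (k + 1) - a (k + 1) * w ^ (k + 1))
        (f x - f w) := by
      simpa using (hasSum_nat_add_iff' 1).mpr ((h x hx1).sub (h w hw))
    have hrem : HasSum (fun k : ℕ => a (k + 1) * ((w + t) ^ (k + 1) - w ^ (k + 1)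
        - (k + 1) * t * w ^ k)) (f x - f w - t • D) := by
      rw [smul_eq_mul]
      refine (hdiff.sub (hD.mul_left t)).congr_fun fun k => ?_
      simp only [t, add_sub_cancel]
      ring
    rw [norm_pow, norm_norm]
    refine IsUltrametricDist.norm_le_of_hasSum hrem (by positivity) fun k => ?_
    rw [norm_mul]
    exact mul_le_mul (hC ⟨k + 1, rfl⟩) (norm_add_pow_succ_sub_le hw hx k) (norm_nonneg _) hC0
  exact hasDerivAt_iff_isLittleO.mpr (hquad.trans_isLittleO (isLittleO_pow_sub_sub w one_lt_two))

lemma summable_deriv [CompleteSpace K] (h : HasPowerSeriesOnUnitBall f a) {w : K}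
    (hw : ‖w‖ ≤ 1) : Summable fun k : ℕ => ((k : K) + 1) * a (k + 1) * w ^ k := by
  refine NonarchimedeanAddGroup.summable_of_tendsto_cofinite_zero ?_
  rw [Nat.cofinite_eq_atTop]
  refine squeeze_zero_norm (fun k => ?_)
    (by simpa using (h.tendsto_coeff.comp (tendsto_add_atTop_nat 1)).norm)
  have hk1 : ‖(k : K) + 1‖ ≤ 1 := by
    exact_mod_cast IsUltrametricDist.norm_natCast_le_one K (k + 1)
  calc ‖((k : K) + 1) * a (k + 1) * w ^ k‖ ≤ 1 * ‖a (k + 1)‖ * 1 := by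
        rw [norm_mul, norm_mul, norm_pow]
        gcongr
        exact pow_le_one₀ (norm_nonneg _) hw
    _ = ‖(a ∘ (· + 1)) k‖ := by simp

lemma hasSum_deriv [CompleteSpace K] (h : HasPowerSeriesOnUnitBall f a) {w D : K}
    (hw : ‖w‖ ≤ 1) (hf : HasDerivAt f D w) :
    HasSum (fun k : ℕ => ((k : K) + 1) * a (k + 1) * w ^ k) D := by
  have hs := (h.summable_deriv hw).hasSum
  rwa [(h.hasDerivAt hw hs).unique hf] at hs

lemma norm_sub_le (hf : HasPowerSeriesOnUnitBall f a) (hg : HasPowerSeriesOnUnitBall g b)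
    {r : ℝ} (hr : 0 ≤ r) (h : ∀ k, ‖a k - b k‖ ≤ r) {w : K} (hw : ‖w‖ ≤ 1) :
    ‖f w - g w‖ ≤ r := by
  refine IsUltrametricDist.norm_le_of_hasSum ((hf w hw).sub (hg w hw)) hr fun k => ?_
  rw [← sub_mul, norm_mul, norm_pow]
  exact (mul_le_of_le_one_right (norm_nonneg _) (pow_le_one₀ (norm_nonneg _) hw)).trans (h k)

lemma coeff_recurrence [CompleteSpace K] {d : ℕ → K} {π : K} (hπ : ‖π‖ < 1)
    (hf : HasPowerSeriesOnUnitBall f d)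
    (hg : HasPowerSeriesOnUnitBall g a)
    (hode : ∀ w : K, ‖w‖ ≤ 1 → HasDerivAt f (g w / (1 + π * w)) w) (k : ℕ) :
    ((k : K) + 1) * d (k + 1) + π * k * d k = a k := by
  suffices HasPowerSeriesOnUnitBall g fun k => ((k : K) + 1) * d (k + 1) + π * k * d k from
    congrFun (this.unique hg) k
  intro w hw
  have hπw : ‖-(π * w)‖ < 1 := by
    rw [norm_neg, norm_mul]
    exact (mul_le_of_le_one_right (norm_nonneg _) hw).trans_lt hπ
  have hne : 1 + π * w ≠ 0 := by simpa using one_sub_ne_zero_of_norm_lt_one hπw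
  have hderiv := hf.hasSum_deriv hw (hode w hw)
  have hshift : HasSum (fun k : ℕ => π * k * d k * w ^ k) (π * w * (g w / (1 + π * w))) := by
    refine (hasSum_nat_add_iff' 1).mp ?_
    simpa [pow_succ, mul_comm, mul_left_comm, mul_assoc] using hderiv.mul_left (π * w)
  have hval : g w / (1 + π * w) + π * w * (g w / (1 + π * w)) = g w := by
    field_simp
  rw [← hval]
  exact (hderiv.add hshift).congr_fun fun k => by ring

end HasPowerSeriesOnUnitBall

lemma hasPowerSeriesOnUnitBall_sum_range (b : ℕ → K) (N : ℕ) :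
    HasPowerSeriesOnUnitBall (fun w => ∑ k ∈ range N, b k * w ^ k)
      fun k => if k < N then b k else 0 := fun w _ => by
  have hfin : HasSum (fun k => (if k < N then b k else 0) * w ^ k)
      (∑ k ∈ range N, (if k < N then b k else 0) * w ^ k) :=
    hasSum_sum_of_ne_finset_zero fun k hk => by simp_all
  convert hfin using 1
  exact sum_congr rfl fun k hk => by simp_all

lemma hasPowerSeriesOnUnitBall_taylorCoeff (c : ℕ → K) (m : ℕ) :
    HasPowerSeriesOnUnitBall (fun w => ∑ k ∈ range (m + 1), c (m - k) * w ^ k / k !)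
      (taylorCoeff c m) := by
  convert hasPowerSeriesOnUnitBall_sum_range (fun k => c (m - k) / k !) (m + 1) using 2 with w
  · exact sum_congr rfl fun k _ => by ring
  · rfl

lemma hasPowerSeriesOnUnitBall_geomCoeff {α π : K} (hα : α ≠ 1)
    (hβπ : ‖α / (1 - α) * π‖ < 1) :
    HasPowerSeriesOnUnitBall (fun w => α * (1 + π * w) / (1 - α * (1 + π * w)))
      (geomCoeff α π) := by
  intro w hw
  have hr : ‖α / (1 - α) * π * w‖ < 1 := by
    rw [norm_mul]
    exact (mul_le_of_le_one_right (norm_nonneg _) hw).trans_lt hβπ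
  have h1α : 1 - α ≠ 0 := sub_ne_zero.mpr hα.symm
  have h1r := one_sub_ne_zero_of_norm_lt_one hr
  have hfactor : 1 - α / (1 - α) * π * w = (1 - α * (1 + π * w)) / (1 - α) := by
    field_simp
    ring
  have hden : 1 - α * (1 + π * w) ≠ 0 := by
    simpa [hfactor, h1α] using h1r
  have hval : (1 - α)⁻¹ * (1 - α / (1 - α) * π * w)⁻¹ - 1
      = α * (1 + π * w) / (1 - α * (1 + π * w)) := by
    rw [hfactor]
    field_simp
    ring
  have hsum := ((hasSum_geometric_of_norm_lt_one hr).mul_left (1 - α)⁻¹).sub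
    (hasSum_ite_eq 0 (1 : K))
  rw [hval] at hsum
  refine hsum.congr_fun fun k => ?_
  rw [geomCoeff]
  split_ifs with hk
  · simp [hk]
  · simp only [sub_zero, mul_pow]
    ring

end PowerSeries

theorem g_m_congruence_general {K : Type*} [NontriviallyNormedField K] [CompleteSpace K]
    (na : IsNonarchimedean fun x : K => ‖x‖)
    (p n : ℕ) (hp : p.Prime) (hpn : n + 1 < p)
    (hpnorm : ‖(p : K)‖ < 1) (hp0 : (p : K) ≠ 0)
    (α : K) (hα1 : ‖1 - α‖ = 1)
    (g : ℕ → K → K) (c : ℕ → K) (hc : ∀ m, ‖c m‖ ≤ 1) (hc0 : c 0 = α / (1 - α))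
    (hg0 : ∀ w : K, ‖w‖ ≤ 1 →
      g 0 w = α * (1 + (p : K) * w) / (1 - α * (1 + (p : K) * w)))
    (hinit : ∀ m, m ≤ n → g m 0 = c m)
    (hser : ∀ m, m ≤ n → ∃ d : ℕ → K,
      ∀ w : K, ‖w‖ ≤ 1 → HasSum (fun k : ℕ => d k * w ^ k) (g m w))
    (hode : ∀ m, m + 1 ≤ n → ∀ w : K, ‖w‖ ≤ 1 →
      HasDerivAt (g (m + 1)) (g m w / (1 + (p : K) * w)) w) :
    ∀ m, m ≤ n → ∀ w : K, ‖w‖ ≤ 1 →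
      ‖g m w - ∑ k ∈ Finset.range (m + 1), c (m - k) * w ^ k / (k.factorial : K)‖
        ≤ ‖(p : K)‖ := by
  have := IsUltrametricDist.isUltrametricDist_of_isNonarchimedean_norm na
  have key : ∀ m ≤ n, ∃ a, HasPowerSeriesOnUnitBall (g m) a ∧
      IsTaylorApprox (p : K) c m fun k => k ! * a k := by
    intro m hm
    induction m with
    | zero =>
      have hα : α ≠ 1 := by rintro rfl; simp at hα1
      have hβp : ‖α / (1 - α) * p‖ < 1 := by
        rw [norm_mul]
        exact (mul_le_of_le_one_left (norm_nonneg _) (hc0 ▸ hc 0)).trans_lt hpnorm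
      exact ⟨_, (hasPowerSeriesOnUnitBall_geomCoeff hα hβp).congr fun w hw => (hg0 w hw).symm,
        isTaylorApprox_zero_geomCoeff hα1 hc0 (hc 0)⟩
    | succ m ih =>
      obtain ⟨a, ha, hA⟩ := ih (by omega)
      obtain ⟨d, hd⟩ : ∃ d, HasPowerSeriesOnUnitBall (g (m + 1)) d := hser (m + 1) hm
      refine ⟨d, hd, hA.succ hpnorm.le hc (by simp [hd.coeff_zero, hinit (m + 1) hm])
        fun k => ?_⟩
      have hrec := hd.coeff_recurrence hpnorm ha (hode m hm) k
      rw [Nat.factorial_succ]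
      push_cast
      linear_combination (k ! : K) * hrec
  intro m hm w hw
  obtain ⟨a, ha, hA⟩ := key m hm
  exact ha.norm_sub_le (hasPowerSeriesOnUnitBall_taylorCoeff c m) (norm_nonneg _)
    (hA.norm_sub_taylorCoeff_le hp hpnorm hp0 (by omega)) hw

/-- Let `K` be a complete nonarchimedean field of mixed characteristic
`(0,p)` (ring of integers `W = {x | ‖x‖ ≤ 1}`, uniformizer `p`), with `p > n+1`. Let
`α` with `‖α‖ = ‖1-α‖ = 1`, and let `g_0, …, g_n : W → K` be given by convergent power
series with `g₀(w) = α(1+pw)/(1-α(1+pw))`, `g_m(0) = c_m ∈ W` (`c_0 = α/(1-α)`), and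
`g_{m+1}'(w) = g_m(w)/(1+pw)`. Then for each `m ≤ n` and all `w ∈ W`:
`g_m(w) ≡ ∑_{k=0}^{m} c_{m-k} w^k/k! (mod p)`. -/
theorem g_m_congruence {K : Type*} [NontriviallyNormedField K] [CompleteSpace K]
    [CharZero K] (na : IsNonarchimedean fun x : K => ‖x‖)
    (p n : ℕ) (hp : p.Prime) (hpn : n + 1 < p)
    (hpnorm : ‖(p : K)‖ < 1) (hp0 : (p : K) ≠ 0)
    (α : K) (hα : ‖α‖ = 1) (hα1 : ‖1 - α‖ = 1)
    (g : ℕ → K → K) (c : ℕ → K) (hc : ∀ m, ‖c m‖ ≤ 1) (hc0 : c 0 = α / (1 - α))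
    (hg0 : ∀ w : K, ‖w‖ ≤ 1 →
      g 0 w = α * (1 + (p : K) * w) / (1 - α * (1 + (p : K) * w)))
    (hinit : ∀ m, m ≤ n → g m 0 = c m)
    (hser : ∀ m, m ≤ n → ∃ d : ℕ → K,
      ∀ w : K, ‖w‖ ≤ 1 → HasSum (fun k : ℕ => d k * w ^ k) (g m w))
    (hode : ∀ m, m + 1 ≤ n → ∀ w : K, ‖w‖ ≤ 1 →
      HasDerivAt (g (m + 1)) (g m w / (1 + (p : K) * w)) w) :
    ∀ m, m ≤ n → ∀ w : K, ‖w‖ ≤ 1 →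
      ‖g m w - ∑ k ∈ Finset.range (m + 1), c (m - k) * w ^ k / (k.factorial : K)‖
        ≤ ‖(p : K)‖ :=
  g_m_congruence_general na p n hp hpn hpnorm hp0 α hα1 g c hc hc0 hg0 hinit hser hode
end
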